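/- arXiv:1807.09644 — 9 statements merged into one kernel-verified Lean document; each statement's English description precedes it below -/
import Mathlib

section
/- Let T be an irreducible symmetric nonnegative order-m tensor of dimension n, and suppose x ≥ 0 is a nonzero Z-eigenvector of T with eigenvalue λ > 0, i.e., Σ_{j₂,…,jₘ} T_{i,j₂,…,jₘ} x_{j₂}⋯x_{jₘ} = λ·x_i for all i. Then x is strictly positive: x_i > 0 for all i. -/
/-- If T is an irreducible symmetric nonnegative order-(d+1) tensor of
dimension n, and x ≥ 0 is a nonzero Z-eigenvector of T with eigenvalue λ > 0, then
x is strictly positive. -/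
theorem stmt_1 {n d : ℕ} (hd : 1 ≤ d)
    (T : (Fin (d + 1) → Fin n) → ℝ)
    (hnonneg : ∀ a, 0 ≤ T a)
    (hsymm : ∀ (σ : Equiv.Perm (Fin (d + 1))) (a : Fin (d + 1) → Fin n), T (a ∘ σ) = T a)
    (hirr : ¬ ∃ S : Finset (Fin n), S.Nonempty ∧ S ≠ Finset.univ ∧
      ∀ i ∈ S, ∀ j : Fin d → Fin n, (∀ k, j k ∉ S) → T (Fin.cons i j) = 0)
    (x : Fin n → ℝ) (hx : ∀ i, 0 ≤ x i) (hx0 : x ≠ 0)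
    (lam : ℝ) (hlam : 0 < lam)
    (heig : ∀ i, ∑ j : Fin d → Fin n, T (Fin.cons i j) * ∏ k, x (j k) = lam * x i) :
    ∀ i, 0 < x i := by
  intro i
  by_contra hi
  have hxi : x i = 0 := le_antisymm (not_lt.mp hi) (hx i)
  apply hirr
  refine ⟨Finset.univ.filter (fun k => x k = 0), ⟨i, by simp [hxi]⟩, ?_, ?_⟩
  · intro hS
    apply hx0
    funext k
    have : k ∈ Finset.univ.filter (fun k => x k = 0) := by rw [hS]; exact Finset.mem_univ k
    simpa using this
  · intro i' hi' j hj
    have hxi' : x i' = 0 := by simpa using hi'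
    have hsum : ∑ j : Fin d → Fin n, T (Fin.cons i' j) * ∏ k, x (j k) = 0 := by
      rw [heig i', hxi', mul_zero]
    have hterm : T (Fin.cons i' j) * ∏ k, x (j k) = 0 := by
      have := (Finset.sum_eq_zero_iff_of_nonneg (fun a _ =>
        mul_nonneg (hnonneg _) (Finset.prod_nonneg fun k _ => hx _))).mp hsum j
        (Finset.mem_univ j)
      exact this
    have hprod : 0 < ∏ k, x (j k) := by
      apply Finset.prod_pos
      intro k _
      have := hj k
      simp only [Finset.mem_filter, Finset.mem_univ, true_and] at this
      exact lt_of_le_of_ne (hx _) (Ne.symm this)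
    exact (mul_eq_zero.mp hterm).resolve_right (ne_of_gt hprod)
end

section
/- In an m-uniform sunflower hypergraph with singleton core {u}, for any Z-eigenvector centrality vector (positive Z-eigenvector with positive eigenvalue of the adjacency tensor), all nodes in the same petal other than u have equal centrality scores. -/
lemma swap_image_erase {V : Type*} [DecidableEq V] {P : Finset V} {v w : V}
    (hv : v ∈ P) (hw : w ∈ P) :
    Finset.image (Equiv.swap v w) (P.erase v) = P.erase w := by
  ext y
  have hmem : y ∈ Finset.image (Equiv.swap v w) (P.erase v) ↔ Equiv.swap v w y ∈ P.erase v := by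
    constructor
    · intro h
      obtain ⟨z, hz, rfl⟩ := Finset.mem_image.1 h
      simpa using hz
    · intro h
      exact Finset.mem_image.2 ⟨Equiv.swap v w y, h, by simp⟩
  rw [hmem]
  simp only [Finset.mem_erase]
  constructor
  · rintro ⟨h1, h2⟩
    constructor
    · intro h; subst h; simp at h1
    · rcases eq_or_ne y v with rfl | hyv
      · exact hv
      · rcases eq_or_ne y w with rfl | hyw
        · exact hw
        · rwa [Equiv.swap_apply_of_ne_of_ne hyv hyw] at h2
  · rintro ⟨h1, h2⟩
    constructor
    · intro h
      have h' := congrArg (Equiv.swap v w) h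
      simp at h'
      exact h1 h'
    · rcases eq_or_ne y v with rfl | hyv
      · simpa using hw
      · rcases eq_or_ne y w with rfl | hyw
        · simpa using hv
        · rwa [Equiv.swap_apply_of_ne_of_ne hyv hyw]

/-- In a (d+1)-uniform sunflower hypergraph with singleton core {u},
any positive Z-eigenvector of the adjacency tensor with positive eigenvalue assigns
equal scores to all nodes of the same petal other than u. -/
theorem stmt_2 {V : Type*} [Fintype V] [DecidableEq V] {d : ℕ} (hd : 1 ≤ d)
    (petals : Finset (Finset V)) (u : V)
    (hP : ∀ P ∈ petals, P.card = d + 1 ∧ u ∈ P)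
    (hint : ∀ P ∈ petals, ∀ Q ∈ petals, P ≠ Q → P ∩ Q = {u})
    (T : (Fin (d + 1) → V) → ℝ)
    (hT : ∀ a, T a =
      if Function.Injective a ∧ Finset.image a Finset.univ ∈ petals then 1 else 0)
    (c : V → ℝ) (hc : ∀ v, 0 < c v) (lam : ℝ) (hlam : 0 < lam)
    (heig : ∀ i, ∑ j : Fin d → V, T (Fin.cons i j) * ∏ k, c (j k) = lam * c i) :
    ∀ P ∈ petals, ∀ v ∈ P, ∀ w ∈ P, v ≠ u → w ≠ u → c v = c w := by
  intro P hPmem v hv w hw hvne hwne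
  classical
  set F : V → Finset (Fin d → V) := fun x =>
    Finset.univ.filter (fun j => Function.Injective j ∧ Finset.image j Finset.univ = P.erase x)
    with hF
  have himg : ∀ (x : V) (j : Fin d → V),
      Finset.image (Fin.cons x j : Fin (d+1) → V) Finset.univ
        = insert x (Finset.image j Finset.univ) := by
    intro x j
    ext y
    simp [Fin.exists_fin_succ, Fin.cons_succ, eq_comm]
  have key : ∀ x ∈ P, x ≠ u → lam * c x = (F x).card * ∏ y ∈ P.erase x, c y := by
    intro x hx hxu
    rw [← heig x]
    have hcond : ∀ j : Fin d → V,
        (Function.Injective (Fin.cons x j : Fin (d+1) → V) ∧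
          Finset.image (Fin.cons x j) Finset.univ ∈ petals)
        ↔ (Function.Injective j ∧ Finset.image j Finset.univ = P.erase x) := by
      intro j
      constructor
      · rintro ⟨hinj, hmem⟩
        have hxQ : x ∈ Finset.image (Fin.cons x j) Finset.univ := by
          rw [himg]; exact Finset.mem_insert_self _ _
        have hQP : Finset.image (Fin.cons x j) Finset.univ = P := by
          by_contra hne
          have h2 := hint P hPmem _ hmem (Ne.symm hne)
          have : x ∈ ({u} : Finset V) := by
            rw [← h2]; exact Finset.mem_inter.2 ⟨hx, hxQ⟩
          exact hxu (Finset.mem_singleton.1 this)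
        have hjinj : Function.Injective j := by
          intro a b hab
          have h3 : (Fin.cons x j : Fin (d+1) → V) a.succ = (Fin.cons x j : Fin (d+1) → V) b.succ := by
            simpa [Fin.cons_succ] using hab
          exact Fin.succ_injective _ (hinj h3)
        have hxnot : x ∉ Finset.image j Finset.univ := by
          simp only [Finset.mem_image, Finset.mem_univ, true_and]
          rintro ⟨k, hk⟩
          have h4 : (Fin.cons x j : Fin (d+1) → V) k.succ = (Fin.cons x j : Fin (d+1) → V) 0 := by
            simp [Fin.cons_succ, Fin.cons_zero, hk]
          exact (Fin.succ_ne_zero k) (hinj h4)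
        refine ⟨hjinj, ?_⟩
        rw [himg] at hQP
        rw [← hQP, Finset.erase_insert hxnot]
      · rintro ⟨hjinj, himgj⟩
        have hxnot : x ∉ Finset.image j Finset.univ := by
          rw [himgj]; exact Finset.notMem_erase _ _
        constructor
        · rw [Fin.cons_injective_iff]
          refine ⟨?_, hjinj⟩
          rintro ⟨k, hk⟩
          exact hxnot (Finset.mem_image.2 ⟨k, Finset.mem_univ _, hk⟩)
        · rw [himg, himgj, Finset.insert_erase hx]
          exact hPmem
    calc ∑ j : Fin d → V, T (Fin.cons x j) * ∏ k, c (j k)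
        = ∑ j ∈ F x, ∏ k, c (j k) := by
          rw [hF]
          rw [Finset.sum_filter]
          apply Finset.sum_congr rfl
          intro j _
          rw [hT]
          by_cases h : Function.Injective j ∧ Finset.image j Finset.univ = P.erase x
          · rw [if_pos ((hcond j).2 h), if_pos h, one_mul]
          · rw [if_neg (fun hc' => h ((hcond j).1 hc')), if_neg h, zero_mul]
      _ = ∑ j ∈ F x, ∏ y ∈ P.erase x, c y := by
          apply Finset.sum_congr rfl
          intro j hj
          simp only [hF, Finset.mem_filter, Finset.mem_univ, true_and] at hj
          rw [← hj.2, Finset.prod_image (fun a _ b _ h => hj.1 h)]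
      _ = (F x).card * ∏ y ∈ P.erase x, c y := by
          rw [Finset.sum_const, nsmul_eq_mul]
  have hcardF : (F v).card = (F w).card := by
    apply Finset.card_bij (fun j _ => (Equiv.swap v w) ∘ j)
    · intro j hj
      simp only [hF, Finset.mem_filter, Finset.mem_univ, true_and] at hj ⊢
      refine ⟨(Equiv.swap v w).injective.comp hj.1, ?_⟩
      have h5 : Finset.image ((Equiv.swap v w) ∘ j) Finset.univ
          = Finset.image (Equiv.swap v w) (Finset.image j Finset.univ) := by
        rw [Finset.image_image]
      rw [h5, hj.2, swap_image_erase hv hw]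
    · intro j1 hj1 j2 hj2 h
      funext k
      exact (Equiv.swap v w).injective (congrFun h k)
    · intro j hj
      refine ⟨(Equiv.swap v w) ∘ j, ?_, ?_⟩
      · simp only [hF, Finset.mem_filter, Finset.mem_univ, true_and] at hj ⊢
        refine ⟨(Equiv.swap v w).injective.comp hj.1, ?_⟩
        have h5 : Finset.image ((Equiv.swap v w) ∘ j) Finset.univ
            = Finset.image (Equiv.swap v w) (Finset.image j Finset.univ) := by
          rw [Finset.image_image]
        rw [h5, hj.2]
        rw [Equiv.swap_comm]
        exact swap_image_erase hw hv
      · funext k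
        simp
  have hkv := key v hv hvne
  have hkw := key w hw hwne
  have hprodv : (∏ y ∈ P.erase v, c y) * c v = ∏ y ∈ P, c y := by
    rw [mul_comm, Finset.mul_prod_erase P c hv]
  have hprodw : (∏ y ∈ P.erase w, c y) * c w = ∏ y ∈ P, c y := by
    rw [mul_comm, Finset.mul_prod_erase P c hw]
  have hsq : lam * (c v * c v) = lam * (c w * c w) := by
    calc lam * (c v * c v) = (lam * c v) * c v := by ring
      _ = ((F v).card * ∏ y ∈ P.erase v, c y) * c v := by rw [hkv]
      _ = (F v).card * ∏ y ∈ P, c y := by rw [mul_assoc, hprodv]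
      _ = (F w).card * ∏ y ∈ P, c y := by rw [hcardF]
      _ = ((F w).card * ∏ y ∈ P.erase w, c y) * c w := by rw [mul_assoc, hprodw]
      _ = (lam * c w) * c w := by rw [hkw]
      _ = lam * (c w * c w) := by ring
  have h6 : c v * c v = c w * c w := mul_left_cancel₀ (ne_of_gt hlam) hsq
  nlinarith [hc v, hc w]
end

section
/- Let H be an m-uniform sunflower with singleton core {u} and r ≥ 2 petals, with m ≥ 4. If c is any positive Z-eigenvector of the adjacency tensor with positive eigenvalue, then c_u / c_v = √r for every node v ≠ u, and consequently all nodes other than u have the same centrality. -/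
/-- For an m-uniform sunflower with singleton core {u}, r ≥ 2 petals and
m ≥ 4, any positive Z-eigenvector with positive eigenvalue satisfies c_u / c_v = √r for
every node v ≠ u; consequently all nodes other than u have the same centrality. -/
theorem stmt_3 {V : Type*} [Fintype V] [DecidableEq V] (m r : ℕ) (hm : 4 ≤ m)
    (petals : Finset (Finset V)) (u : V) (hr : petals.card = r) (hr2 : 2 ≤ r)
    (hP : ∀ P ∈ petals, P.card = m ∧ u ∈ P)
    (hint : ∀ P ∈ petals, ∀ Q ∈ petals, P ≠ Q → P ∩ Q = {u})
    (hcover : ∀ v : V, ∃ P ∈ petals, v ∈ P)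
    (c : V → ℝ) (hc : ∀ v, 0 < c v) (lam : ℝ) (hlam : 0 < lam)
    (heig : ∀ i, ((m - 1).factorial : ℝ) *
      ∑ P ∈ petals.filter (fun P => i ∈ P), ∏ v ∈ P.erase i, c v = lam * c i) :
    (∀ v, v ≠ u → c u / c v = Real.sqrt r) ∧
    (∀ v w, v ≠ u → w ≠ u → c v = c w) := by
  -- a vertex ≠ u lies in a unique petal
  have huniq : ∀ v, v ≠ u → ∀ P ∈ petals, ∀ Q ∈ petals, v ∈ P → v ∈ Q → P = Q := by
    intro v hv P hPm Q hQm hvP hvQ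
    by_contra hne
    have hmem : v ∈ P ∩ Q := Finset.mem_inter.mpr ⟨hvP, hvQ⟩
    rw [hint P hPm Q hQm hne] at hmem
    exact hv (Finset.mem_singleton.mp hmem)
  -- key eigen identity for non-core vertices
  have hkey : ∀ v, v ≠ u → ∀ P ∈ petals, v ∈ P →
      lam * (c v) ^ 2 = ((m - 1).factorial : ℝ) * ∏ w ∈ P, c w := by
    intro v hv P hPm hvP
    have hfilter : petals.filter (fun Q => v ∈ Q) = {P} := by
      apply Finset.eq_singleton_iff_unique_mem.mpr
      refine ⟨Finset.mem_filter.mpr ⟨hPm, hvP⟩, ?_⟩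
      intro Q hQ
      obtain ⟨hQm, hvQ⟩ := Finset.mem_filter.mp hQ
      exact huniq v hv Q hQm P hPm hvQ hvP
    have h := heig v
    rw [hfilter, Finset.sum_singleton] at h
    calc lam * c v ^ 2 = (lam * c v) * c v := by ring
      _ = (((m - 1).factorial : ℝ) * ∏ w ∈ P.erase v, c w) * c v := by rw [h]
      _ = ((m - 1).factorial : ℝ) * ∏ w ∈ P, c w := by
          rw [mul_assoc, Finset.prod_erase_mul P c hvP]
  -- within one petal, all non-core values agree
  have hsame : ∀ P ∈ petals, ∀ v ∈ P, ∀ w ∈ P, v ≠ u → w ≠ u → c v = c w := by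
    intro P hPm v hvP w hwP hv hw
    have h1 := hkey v hv P hPm hvP
    have h2 := hkey w hw P hPm hwP
    have hsq : c v ^ 2 = c w ^ 2 :=
      mul_left_cancel₀ (ne_of_gt hlam) (h1.trans h2.symm)
    have hfac : (c v - c w) * (c v + c w) = 0 := by linear_combination hsq
    rcases mul_eq_zero.mp hfac with h | h
    · linarith
    · nlinarith [hc v, hc w]
  -- product over a petal
  have hprodP : ∀ P ∈ petals, ∀ v ∈ P, v ≠ u →
      ∏ w ∈ P, c w = c u * c v ^ (m - 1) := by
    intro P hPm v hvP hv
    obtain ⟨hcard, huP⟩ := hP P hPm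
    rw [← Finset.mul_prod_erase P c huP]
    congr 1
    have hconst : ∀ w ∈ P.erase u, c w = c v := by
      intro w hw
      obtain ⟨hwne, hwP⟩ := Finset.mem_erase.mp hw
      exact hsame P hPm w hwP v hvP hwne hv
    rw [Finset.prod_congr rfl hconst, Finset.prod_const,
      Finset.card_erase_of_mem huP, hcard]
  -- lam = K * (c v)^(m-3)
  have hlamK : ∀ v, v ≠ u →
      lam = ((m - 1).factorial : ℝ) * c u * c v ^ (m - 3) := by
    intro v hv
    obtain ⟨P, hPm, hvP⟩ := hcover v
    have h := hkey v hv P hPm hvP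
    rw [hprodP P hPm v hvP hv] at h
    have hpow : c v ^ (m - 1) = c v ^ (m - 3) * c v ^ 2 := by
      rw [← pow_add]; congr 1; omega
    rw [hpow] at h
    have hv2 : (c v) ^ 2 ≠ 0 := pow_ne_zero _ (ne_of_gt (hc v))
    have h' : lam * c v ^ 2 = (((m - 1).factorial : ℝ) * c u * c v ^ (m - 3)) * c v ^ 2 := by
      linear_combination h
    exact mul_right_cancel₀ hv2 h'
  -- all non-core values agree globally
  have hglobal : ∀ v w, v ≠ u → w ≠ u → c v = c w := by
    intro v w hv hw
    have h1 := hlamK v hv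
    have h2 := hlamK w hw
    have heq : c v ^ (m - 3) = c w ^ (m - 3) := by
      have hK : ((m - 1).factorial : ℝ) * c u ≠ 0 :=
        ne_of_gt (mul_pos (by positivity) (hc u))
      have := h1.symm.trans h2
      exact mul_left_cancel₀ hK this
    have hn : m - 3 ≠ 0 := by omega
    rcases lt_trichotomy (c v) (c w) with h | h | h
    · exact absurd heq (ne_of_lt (pow_lt_pow_left₀ h (le_of_lt (hc v)) hn))
    · exact h
    · exact absurd heq.symm (ne_of_lt (pow_lt_pow_left₀ h (le_of_lt (hc w)) hn))
  -- pick a non-core vertex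
  obtain ⟨P₀, hP₀m⟩ := Finset.card_pos.mp (by omega : 0 < petals.card)
  obtain ⟨hcard₀, huP₀⟩ := hP P₀ hP₀m
  have : (P₀.erase u).Nonempty := by
    rw [← Finset.card_pos, Finset.card_erase_of_mem huP₀, hcard₀]; omega
  obtain ⟨v₀, hv₀⟩ := this
  obtain ⟨hv₀ne, hv₀P⟩ := Finset.mem_erase.mp hv₀
  set a := c v₀ with ha_def
  have ha : 0 < a := hc v₀
  -- core eigen equation
  have hfilt : petals.filter (fun P => u ∈ P) = petals :=
    Finset.filter_true_of_mem (fun P hPm => (hP P hPm).2)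
  have hu := heig u
  rw [hfilt] at hu
  have hterm : ∀ P ∈ petals, ∏ w ∈ P.erase u, c w = a ^ (m - 1) := by
    intro P hPm
    obtain ⟨hcard, huP⟩ := hP P hPm
    have hconst : ∀ w ∈ P.erase u, c w = a := by
      intro w hw
      exact hglobal w v₀ (Finset.mem_erase.mp hw).1 hv₀ne
    rw [Finset.prod_congr rfl hconst, Finset.prod_const,
      Finset.card_erase_of_mem huP, hcard]
  rw [Finset.sum_congr rfl hterm, Finset.sum_const, hr, nsmul_eq_mul] at hu
  -- hu : (m-1)! * (r * a^(m-1)) = lam * c u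
  have hII : lam * a ^ 2 = ((m - 1).factorial : ℝ) * (c u * a ^ (m - 1)) := by
    have h := hkey v₀ hv₀ne P₀ hP₀m hv₀P
    rw [hprodP P₀ hP₀m v₀ hv₀P hv₀ne] at h
    exact h
  have hcancel : lam * (c u ^ 2) = lam * ((r : ℝ) * a ^ 2) := by
    calc lam * c u ^ 2 = (lam * c u) * c u := by ring
      _ = (((m - 1).factorial : ℝ) * ((r : ℝ) * a ^ (m - 1))) * c u := by rw [hu]
      _ = (r : ℝ) * (((m - 1).factorial : ℝ) * (c u * a ^ (m - 1))) := by ring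
      _ = (r : ℝ) * (lam * a ^ 2) := by rw [hII]
      _ = lam * ((r : ℝ) * a ^ 2) := by ring
  have hsq : c u ^ 2 = (r : ℝ) * a ^ 2 := mul_left_cancel₀ (ne_of_gt hlam) hcancel
  have hsqrt : Real.sqrt r = c u / a := by
    have h : ((r : ℝ)) = (c u / a) ^ 2 := by
      rw [div_pow]
      field_simp
      linarith [hsq]
    rw [h, Real.sqrt_sq (le_of_lt (div_pos (hc u) ha))]
  constructor
  · intro v hv
    rw [hglobal v v₀ hv hv₀ne, ← ha_def, ← hsqrt]
  · exact hglobal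
end

section
/- Let H be an m-uniform sunflower with singleton core {u} and r petals (m ≥ 2, r ≥ 1). The unique (up to scaling) positive H-eigenvector c of the adjacency tensor satisfies c_u / c_v = r^{1/m} for every node v ≠ u, with eigenvalue (after symmetry normalization) λ = r^{1/m}. In particular, for fixed r, c_u / c_v → 1 as m → ∞. -/
/-- For the m-uniform sunflower with singleton core {u} and r petals
(m ≥ 2, r ≥ 1), the positive H-eigenvector c of the adjacency tensor satisfies
c_u / c_v = r^(1/m) for every v ≠ u, with (symmetry-normalized) eigenvalue r^(1/m);
in particular r^(1/m) → 1 as m → ∞. -/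
theorem stmt_5 {V : Type*} [Fintype V] [DecidableEq V] (m r : ℕ) (hm : 2 ≤ m)
    (petals : Finset (Finset V)) (u : V) (hr : petals.card = r) (hr1 : 1 ≤ r)
    (hP : ∀ P ∈ petals, P.card = m ∧ u ∈ P)
    (hint : ∀ P ∈ petals, ∀ Q ∈ petals, P ≠ Q → P ∩ Q = {u})
    (hcover : ∀ v : V, ∃ P ∈ petals, v ∈ P)
    (c : V → ℝ) (hc : ∀ v, 0 < c v) (lam : ℝ) (hlam : 0 < lam)
    (heig : ∀ i, ∑ P ∈ petals.filter (fun P => i ∈ P), ∏ v ∈ P.erase i, c v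
      = lam * c i ^ (m - 1)) :
    (∀ v, v ≠ u → c u / c v = (r : ℝ) ^ ((1 : ℝ) / m)) ∧
    lam = (r : ℝ) ^ ((1 : ℝ) / m) ∧
    Filter.Tendsto (fun k : ℕ => (r : ℝ) ^ ((1 : ℝ) / k)) Filter.atTop (nhds 1) := by
  have hm0 : m ≠ 0 := by omega
  have hm1 : 1 ≤ m := by omega
  -- key: for v ≠ u, c u = lam * c v
  have key : ∀ v, v ≠ u → c u = lam * c v := by
    intro v hv
    obtain ⟨P, hPm, hvP⟩ := hcover v
    obtain ⟨hcard, huP⟩ := hP P hPm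
    have heq : ∀ w ∈ P, w ≠ u → lam * c w ^ m = ∏ x ∈ P, c x := by
      intro w hwP hwu
      have hfilt : petals.filter (fun Q => w ∈ Q) = {P} := by
        ext Q
        simp only [Finset.mem_filter, Finset.mem_singleton]
        constructor
        · rintro ⟨hQ, hwQ⟩
          by_contra hne
          have hmem : w ∈ P ∩ Q := Finset.mem_inter.2 ⟨hwP, hwQ⟩
          rw [hint P hPm Q hQ (fun h => hne h.symm)] at hmem
          exact hwu (Finset.mem_singleton.1 hmem)
        · rintro rfl; exact ⟨hPm, hwP⟩
      have h1 := heig w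
      rw [hfilt, Finset.sum_singleton] at h1
      have hms : c w ^ m = c w * c w ^ (m - 1) := by
        rw [← pow_succ']; congr 1; omega
      calc lam * c w ^ m = c w * (lam * c w ^ (m - 1)) := by rw [hms]; ring
        _ = c w * ∏ x ∈ P.erase w, c x := by rw [h1]
        _ = ∏ x ∈ P, c x := Finset.mul_prod_erase P c hwP
    have hsame : ∀ w ∈ P.erase u, c w = c v := by
      intro w hw
      obtain ⟨hwu, hwP⟩ := Finset.mem_erase.1 hw
      have := (heq w hwP hwu).trans (heq v hvP hv).symm
      have h2 : c w ^ m = c v ^ m := mul_left_cancel₀ hlam.ne' this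
      exact (pow_left_inj₀ (hc w).le (hc v).le hm0).1 h2
    have hprod : ∏ x ∈ P.erase u, c x = c v ^ (m - 1) := by
      rw [Finset.prod_congr rfl hsame, Finset.prod_const, Finset.card_erase_of_mem huP, hcard]
    have h3 : lam * c v ^ m = c u * c v ^ (m - 1) := by
      rw [heq v hvP hv, ← Finset.mul_prod_erase P c huP, hprod]
    have h4 : c v ^ m = c v * c v ^ (m - 1) := by
      rw [← pow_succ']
      congr 1; omega
    have hpos : (0:ℝ) < c v ^ (m - 1) := pow_pos (hc v) _
    rw [h4, ← mul_assoc] at h3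
    exact (mul_right_cancel₀ hpos.ne' h3).symm
  -- eigenvalue equation at u
  obtain ⟨P₀, hP₀, _⟩ := hcover u
  have hlamm : lam ^ m = (r : ℝ) := by
    have hfiltu : petals.filter (fun Q => u ∈ Q) = petals :=
      Finset.filter_true_of_mem (fun Q hQ => (hP Q hQ).2)
    have h1 := heig u
    rw [hfiltu] at h1
    have hterm : ∀ Q ∈ petals, ∏ x ∈ Q.erase u, c x = (c u / lam) ^ (m - 1) := by
      intro Q hQ
      obtain ⟨hQc, huQ⟩ := hP Q hQ
      have : ∀ w ∈ Q.erase u, c w = c u / lam := by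
        intro w hw
        obtain ⟨hwu, _⟩ := Finset.mem_erase.1 hw
        rw [key w hwu]; field_simp
      rw [Finset.prod_congr rfl this, Finset.prod_const, Finset.card_erase_of_mem huQ, hQc]
    rw [Finset.sum_congr rfl hterm, Finset.sum_const, hr, nsmul_eq_mul, div_pow] at h1
    have hcu : (0:ℝ) < c u ^ (m - 1) := pow_pos (hc u) _
    have hlm : (0:ℝ) < lam ^ (m - 1) := pow_pos hlam _
    have h2 : (r : ℝ) * c u ^ (m - 1) = lam ^ m * c u ^ (m - 1) := by
      have hms : lam ^ m = lam * lam ^ (m - 1) := by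
        rw [← pow_succ']; congr 1; omega
      field_simp at h1
      rw [hms]
      nlinarith [h1]
    exact (mul_right_cancel₀ hcu.ne' h2).symm
  have hlr : lam = (r : ℝ) ^ ((1 : ℝ) / m) := by
    have : (r : ℝ) ^ ((1 : ℝ) / m) = (lam ^ (m : ℝ)) ^ ((1 : ℝ) / m) := by
      rw [Real.rpow_natCast, hlamm]
    rw [this, ← Real.rpow_mul hlam.le, mul_one_div, div_self (by exact_mod_cast hm0),
      Real.rpow_one]
  refine ⟨fun v hv => ?_, hlr, ?_⟩
  · rw [key v hv, ← hlr, mul_div_assoc, div_self (hc v).ne', mul_one]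
  · have hr0 : (0:ℝ) < r := by exact_mod_cast hr1
    have h0 : Filter.Tendsto (fun k : ℕ => (1 : ℝ) / k) Filter.atTop (nhds 0) :=
      tendsto_one_div_atTop_nhds_zero_nat
    have := (Real.continuousAt_const_rpow (a := (r:ℝ)) (b := 0) hr0.ne').tendsto.comp h0
    simpa [Function.comp_def, Real.rpow_zero] using this
end

section
/- Let H be an m-uniform sunflower with singleton core {u} and r petals, r ≥ 2. The clique motif eigenvector centrality (Perron eigenvector of the matrix W counting hyperedges containing each pair) satisfies c_u / c_v = 2r(m-1) / (√(m² + 4(m-1)(r-1)) + m - 2) for every node v ≠ u, with eigenvalue λ = (1/2)√(m² + 4(m-1)(r-1)) + m - 2. -/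
/-- For the m-uniform sunflower with singleton core {u} and r ≥ 2 petals,
the clique motif eigenvector centrality (positive eigenvector of the pair-counting
matrix W) satisfies c_u / c_v = 2r(m-1)/(√(m² + 4(m-1)(r-1)) + m - 2) for every node
v ≠ u, with eigenvalue λ = (√(m² + 4(m-1)(r-1)) + m - 2)/2. -/
theorem stmt_6 {V : Type*} [Fintype V] [DecidableEq V] (m r : ℕ) (hm : 2 ≤ m)
    (petals : Finset (Finset V)) (u : V) (hr : petals.card = r) (hr2 : 2 ≤ r)
    (hP : ∀ P ∈ petals, P.card = m ∧ u ∈ P)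
    (hint : ∀ P ∈ petals, ∀ Q ∈ petals, P ≠ Q → P ∩ Q = {u})
    (hcover : ∀ v : V, ∃ P ∈ petals, v ∈ P)
    (W : Matrix V V ℝ)
    (hW : ∀ x y, W x y =
      if x = y then 0 else ((petals.filter (fun P => x ∈ P ∧ y ∈ P)).card : ℝ))
    (c : V → ℝ) (hc : ∀ v, 0 < c v) (lam : ℝ)
    (heig : W.mulVec c = lam • c) :
    lam = (Real.sqrt ((m : ℝ) ^ 2 + 4 * ((m : ℝ) - 1) * ((r : ℝ) - 1)) + (m : ℝ) - 2) / 2 ∧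
    ∀ v, v ≠ u → c u / c v = 2 * (r : ℝ) * ((m : ℝ) - 1) /
      (Real.sqrt ((m : ℝ) ^ 2 + 4 * ((m : ℝ) - 1) * ((r : ℝ) - 1)) + (m : ℝ) - 2) := by
  have hmR : (2:ℝ) ≤ (m:ℝ) := by exact_mod_cast hm
  have hrR : (2:ℝ) ≤ (r:ℝ) := by exact_mod_cast hr2
  have h1m : 1 ≤ m := by omega
  -- uniqueness of the petal containing a non-core vertex
  have huniq : ∀ v : V, v ≠ u → ∀ P ∈ petals, v ∈ P → ∀ Q ∈ petals, v ∈ Q → P = Q := by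
    intro v hv P hPm hvP Q hQm hvQ
    by_contra hne
    have h1 : v ∈ P ∩ Q := Finset.mem_inter.mpr ⟨hvP, hvQ⟩
    rw [hint P hPm Q hQm hne] at h1
    exact hv (Finset.mem_singleton.mp h1)
  have heig' : ∀ v, ∑ y, W v y * c y = lam * c v := by
    intro v
    have := congrFun heig v
    simpa [Matrix.mulVec, dotProduct] using this
  have hsum : ∀ (S : Finset V), ∑ y, (if y ∈ S then (1:ℝ) else 0) * c y = ∑ y ∈ S, c y := by
    intro S
    simp only [ite_mul, one_mul, zero_mul, Finset.sum_ite_mem, Finset.univ_inter]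
  -- row identity for v ≠ u with petal P
  have hrow : ∀ P ∈ petals, ∀ v ∈ P, v ≠ u → ∀ y, W v y = if y ∈ P.erase v then 1 else 0 := by
    intro P hPm v hvP hvu y
    rw [hW]
    by_cases hyv : v = y
    · subst hyv; simp
    · rw [if_neg hyv]
      by_cases hyP : y ∈ P
      · have hfil : petals.filter (fun Q => v ∈ Q ∧ y ∈ Q) = {P} := by
          ext Q
          simp only [Finset.mem_filter, Finset.mem_singleton]
          constructor
          · rintro ⟨hQm, hvQ, _⟩
            exact huniq v hvu Q hQm hvQ P hPm hvP
          · rintro rfl; exact ⟨hPm, hvP, hyP⟩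
        rw [hfil]
        have hmem : y ∈ P.erase v := Finset.mem_erase.mpr ⟨fun h => hyv h.symm, hyP⟩
        simp [hmem]
      · have hfil : petals.filter (fun Q => v ∈ Q ∧ y ∈ Q) = ∅ := by
          ext Q
          simp only [Finset.mem_filter, Finset.notMem_empty, iff_false, not_and]
          intro hQm hvQ hyQ
          exact hyP ((huniq v hvu Q hQm hvQ P hPm hvP) ▸ hyQ)
        rw [hfil]
        have hmem : y ∉ P.erase v := fun h => hyP (Finset.mem_erase.mp h).2
        simp [hmem]
  -- petal eigen-equation
  have hpet : ∀ P ∈ petals, ∀ v ∈ P, v ≠ u → lam * c v = ∑ y ∈ P.erase v, c y := by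
    intro P hPm v hvP hvu
    rw [← heig' v]
    rw [Finset.sum_congr rfl (fun y _ => by rw [hrow P hPm v hvP hvu y])]
    exact hsum _
  -- row identity for u
  have hrowu : ∀ y, W u y = if y ∈ Finset.univ.erase u then 1 else 0 := by
    intro y
    rw [hW]
    by_cases hyu : u = y
    · subst hyu; simp
    · rw [if_neg hyu]
      obtain ⟨P, hPm, hyP⟩ := hcover y
      have hfil : petals.filter (fun Q => u ∈ Q ∧ y ∈ Q) = {P} := by
        ext Q
        simp only [Finset.mem_filter, Finset.mem_singleton]
        constructor
        · rintro ⟨hQm, _, hyQ⟩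
          exact huniq y (fun h => hyu h.symm) Q hQm hyQ P hPm hyP
        · rintro rfl; exact ⟨hPm, (hP _ hPm).2, hyP⟩
      rw [hfil]
      have hmem : y ∈ Finset.univ.erase u :=
        Finset.mem_erase.mpr ⟨fun h => hyu h.symm, Finset.mem_univ y⟩
      simp [hmem]
  have hueq : lam * c u = ∑ y ∈ Finset.univ.erase u, c y := by
    rw [← heig' u]
    rw [Finset.sum_congr rfl (fun y _ => by rw [hrowu y])]
    exact hsum _
  -- within a petal, non-core values are equal
  have hsame : ∀ P ∈ petals, ∀ v ∈ P, v ≠ u → ∀ w ∈ P, w ≠ u → c v = c w := by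
    intro P hPm v hvP hvu w hwP hwu
    have h1 : lam * c v + c v = ∑ y ∈ P, c y := by
      rw [hpet P hPm v hvP hvu]
      exact Finset.sum_erase_add P c hvP
    have h2 : lam * c w + c w = ∑ y ∈ P, c y := by
      rw [hpet P hPm w hwP hwu]
      exact Finset.sum_erase_add P c hwP
    have hupos : 0 < lam * c v := by
      rw [hpet P hPm v hvP hvu]
      have huP : u ∈ P.erase v := Finset.mem_erase.mpr ⟨Ne.symm hvu, (hP P hPm).2⟩
      exact Finset.sum_pos' (fun y _ => (hc y).le) ⟨u, huP, hc u⟩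
    have hlampos : 0 < lam := by
      by_contra h
      push_neg at h
      nlinarith [hc v]
    have h3 : (lam + 1) * (c v - c w) = 0 := by linarith
    rcases mul_eq_zero.mp h3 with h | h
    · linarith
    · linarith
  -- key identity: (lam - m + 2) * c v = c u for all v ≠ u
  have hkey : ∀ v, v ≠ u → (lam - (m:ℝ) + 2) * c v = c u := by
    intro v hvu
    obtain ⟨P, hPm, hvP⟩ := hcover v
    have huP : u ∈ P := (hP P hPm).2
    have hcardP : P.card = m := (hP P hPm).1
    have hceq : ∀ y ∈ P.erase u, c y = c v := by
      intro y hy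
      obtain ⟨hyu, hyP⟩ := Finset.mem_erase.mp hy
      exact hsame P hPm y hyP hyu v hvP hvu
    have hsumPerase : ∑ y ∈ P.erase u, c y = ((m:ℝ) - 1) * c v := by
      rw [Finset.sum_congr rfl hceq, Finset.sum_const, Finset.card_erase_of_mem huP, hcardP,
        nsmul_eq_mul]
      have hcast : ((m - 1 : ℕ) : ℝ) = (m:ℝ) - 1 := by
        push_cast [h1m]
        ring
      rw [hcast]
    have hSP : ∑ y ∈ P, c y = c u + ((m:ℝ) - 1) * c v := by
      rw [← Finset.sum_erase_add P c huP, hsumPerase]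
      ring
    have h1 : lam * c v + c v = ∑ y ∈ P, c y := by
      rw [hpet P hPm v hvP hvu]
      exact Finset.sum_erase_add P c hvP
    rw [hSP] at h1
    linarith
  -- pick a non-core vertex
  obtain ⟨P0, hP0m⟩ : petals.Nonempty := Finset.card_pos.mp (by omega)
  have hne0 : (P0.erase u).Nonempty := by
    apply Finset.card_pos.mp
    rw [Finset.card_erase_of_mem (hP P0 hP0m).2, (hP P0 hP0m).1]
    omega
  obtain ⟨v0, hv0⟩ := hne0
  obtain ⟨hv0u, hv0P⟩ := Finset.mem_erase.mp hv0
  have hlm2 : 0 < lam - (m:ℝ) + 2 := by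
    nlinarith [hkey v0 hv0u, hc v0, hc u]
  -- all non-core values equal
  have hallc : ∀ v, v ≠ u → c v = c v0 := by
    intro v hvu
    exact mul_left_cancel₀ (ne_of_gt hlm2) ((hkey v hvu).trans (hkey v0 hv0u).symm)
  -- partition of univ.erase u into petal remainders
  have hbi : Finset.univ.erase u = petals.biUnion (fun P => P.erase u) := by
    ext v
    simp only [Finset.mem_erase, Finset.mem_univ, and_true, Finset.mem_biUnion]
    constructor
    · intro hvu
      obtain ⟨P, hPm, hvP⟩ := hcover v
      exact ⟨P, hPm, hvu, hvP⟩
    · rintro ⟨P, hPm, hv⟩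
      exact hv.1
  have hdisj : ∀ P ∈ petals, ∀ Q ∈ petals, P ≠ Q → Disjoint (P.erase u) (Q.erase u) := by
    intro P hPm Q hQm hne
    rw [Finset.disjoint_left]
    intro x hxP hxQ
    obtain ⟨hxu, hxP'⟩ := Finset.mem_erase.mp hxP
    obtain ⟨_, hxQ'⟩ := Finset.mem_erase.mp hxQ
    exact hne (huniq x hxu P hPm hxP' Q hQm hxQ')
  have hcard : (Finset.univ.erase u).card = r * (m - 1) := by
    rw [hbi, Finset.card_biUnion hdisj]
    rw [Finset.sum_congr rfl (fun P hPm => by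
      rw [Finset.card_erase_of_mem (hP P hPm).2, (hP P hPm).1])]
    rw [Finset.sum_const, hr, smul_eq_mul]
  -- u equation
  have hueq2 : lam * c u = (r:ℝ) * ((m:ℝ) - 1) * c v0 := by
    rw [hueq, Finset.sum_congr rfl (fun y hy => hallc y (Finset.mem_erase.mp hy).1),
      Finset.sum_const, hcard, nsmul_eq_mul]
    push_cast [h1m]
    ring
  -- quadratic equation for lam
  have hquad : lam * (lam - (m:ℝ) + 2) = (r:ℝ) * ((m:ℝ) - 1) := by
    have h2 : (lam * (lam - (m:ℝ) + 2)) * c v0 = ((r:ℝ) * ((m:ℝ) - 1)) * c v0 := by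
      calc (lam * (lam - (m:ℝ) + 2)) * c v0 = lam * ((lam - (m:ℝ) + 2) * c v0) := by ring
        _ = lam * c u := by rw [hkey v0 hv0u]
        _ = (r:ℝ) * ((m:ℝ) - 1) * c v0 := hueq2
    exact mul_right_cancel₀ (hc v0).ne' h2
  have hrm : 0 < (r:ℝ) * ((m:ℝ) - 1) := by nlinarith
  have hlampos : 0 < lam := by
    by_contra h
    push_neg at h
    nlinarith [mul_nonneg (neg_nonneg.mpr h) hlm2.le]
  set D := (m:ℝ)^2 + 4*((m:ℝ)-1)*((r:ℝ)-1) with hDdef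
  have hDval : D = (2*lam - (m:ℝ) + 2)^2 := by
    rw [hDdef]; linear_combination (-4) * hquad
  have hs : Real.sqrt D = 2*lam - (m:ℝ) + 2 := by
    rw [hDval, Real.sqrt_sq (by linarith)]
  constructor
  · rw [hs]; ring
  · intro v hvu
    have hdpos : (0:ℝ) < Real.sqrt D + (m:ℝ) - 2 := by rw [hs]; linarith
    rw [div_eq_div_iff (hc v).ne' hdpos.ne', hs]
    linear_combination (-2*lam) * (hkey v hvu) + 2*(c v)*hquad
end

section
/- For all integers m ≥ 2 and r ≥ 2, the ratio 2r(m-1) / (√(m² + 4(m-1)(r-1)) + m - 2) is strictly greater than 1. That is, in a sunflower with singleton core, the CEC score of the center exceeds that of any other node. -/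
/-- For all integers m ≥ 2 and r ≥ 2, the CEC center/other ratio
`2r(m-1) / (√(m² + 4(m-1)(r-1)) + m - 2)` is strictly greater than 1. -/
theorem stmt_7 (m r : ℕ) (hm : 2 ≤ m) (hr : 2 ≤ r) :
    1 < 2 * (r : ℝ) * ((m : ℝ) - 1) /
      (Real.sqrt ((m : ℝ) ^ 2 + 4 * ((m : ℝ) - 1) * ((r : ℝ) - 1)) + (m : ℝ) - 2) := by
  have hM : (2:ℝ) ≤ (m:ℝ) := by exact_mod_cast hm
  have hR : (2:ℝ) ≤ (r:ℝ) := by exact_mod_cast hr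
  set M := (m:ℝ); set R := (r:ℝ)
  have harg : 0 < M ^ 2 + 4 * (M - 1) * (R - 1) := by nlinarith
  have hs : 0 < Real.sqrt (M ^ 2 + 4 * (M - 1) * (R - 1)) := Real.sqrt_pos.mpr harg
  have hy : (0:ℝ) < 2 * R * (M - 1) - M + 2 := by nlinarith
  have hlt : Real.sqrt (M ^ 2 + 4 * (M - 1) * (R - 1)) < 2 * R * (M - 1) - M + 2 := by
    rw [show (2 * R * (M - 1) - M + 2) = Real.sqrt ((2 * R * (M - 1) - M + 2) ^ 2) from
      (Real.sqrt_sq hy.le).symm]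
    have h4 : 0 < 4 * R * (R - 1) * (M - 1) ^ 2 := by
      have h1 : (0:ℝ) < (M - 1) ^ 2 := by nlinarith
      have h2 : (0:ℝ) < 4 * R * (R - 1) := by nlinarith
      exact mul_pos h2 h1
    exact Real.sqrt_lt_sqrt harg.le (by nlinarith [h4])
  have hd : 0 < Real.sqrt (M ^ 2 + 4 * (M - 1) * (R - 1)) + M - 2 := by linarith
  rw [one_lt_div hd]
  linarith
end

section
/- Let T be a symmetric nonnegative irreducible order-m tensor and suppose (x, λ) is a Z-eigenpair with x of unit 2-norm achieving the maximum of |T x^m| := |Σ T_{i₁,…,iₘ} x_{i₁}⋯x_{iₘ}| over unit vectors, with λ of largest magnitude among Z-eigenvalues and λ > 0, x ≥ 0. Then x > 0 entrywise. -/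
/-- If T is a symmetric nonnegative irreducible order-(d+1) tensor and
(x, λ) is a Z-eigenpair with x of unit 2-norm achieving the maximum of |T x^m| over unit
vectors, λ of largest magnitude among Z-eigenvalues, λ > 0 and x ≥ 0, then x > 0. -/
theorem stmt_15 {n d : ℕ} (hd : 1 ≤ d)
    (T : (Fin (d + 1) → Fin n) → ℝ)
    (hnonneg : ∀ a, 0 ≤ T a)
    (hsymm : ∀ (σ : Equiv.Perm (Fin (d + 1))) (a : Fin (d + 1) → Fin n), T (a ∘ σ) = T a)
    (hirr : ¬ ∃ S : Finset (Fin n), S.Nonempty ∧ S ≠ Finset.univ ∧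
      ∀ i ∈ S, ∀ j : Fin d → Fin n, (∀ k, j k ∉ S) → T (Fin.cons i j) = 0)
    (x : Fin n → ℝ) (hx : ∀ i, 0 ≤ x i) (hunit : ∑ i, x i ^ 2 = 1)
    (lam : ℝ) (hlam : 0 < lam)
    (heig : ∀ i, ∑ j : Fin d → Fin n, T (Fin.cons i j) * ∏ k, x (j k) = lam * x i)
    (hmax : ∀ y : Fin n → ℝ, ∑ i, y i ^ 2 = 1 →
      |∑ a : Fin (d + 1) → Fin n, T a * ∏ k, y (a k)| ≤
      |∑ a : Fin (d + 1) → Fin n, T a * ∏ k, x (a k)|)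
    (hspec : ∀ (mu : ℝ) (y : Fin n → ℝ), ∑ i, y i ^ 2 = 1 →
      (∀ i, ∑ j : Fin d → Fin n, T (Fin.cons i j) * ∏ k, y (j k) = mu * y i) →
      |mu| ≤ lam) :
    ∀ i, 0 < x i := by
  by_contra h
  push_neg at h
  obtain ⟨i0, hi0⟩ := h
  have hxi0 : x i0 = 0 := le_antisymm hi0 (hx i0)
  apply hirr
  refine ⟨Finset.univ.filter (fun i => x i = 0), ⟨i0, by simp [hxi0]⟩, ?_, ?_⟩
  · intro hS
    have hall : ∀ i, x i = 0 := by
      intro i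
      have hmem : i ∈ Finset.univ.filter (fun i => x i = 0) := by
        rw [hS]; exact Finset.mem_univ i
      exact (Finset.mem_filter.mp hmem).2
    simp [hall] at hunit
  · intro i hi j hj
    have hxi : x i = 0 := (Finset.mem_filter.mp hi).2
    have hsum : ∑ j : Fin d → Fin n, T (Fin.cons i j) * ∏ k, x (j k) = 0 := by
      rw [heig i, hxi, mul_zero]
    have hnn : ∀ j' ∈ Finset.univ, 0 ≤ T (Fin.cons i j') * ∏ k, x (j' k) :=
      fun j' _ => mul_nonneg (hnonneg _) (Finset.prod_nonneg fun k _ => hx _)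
    have hterm : T (Fin.cons i j) * ∏ k, x (j k) = 0 :=
      (Finset.sum_eq_zero_iff_of_nonneg hnn).mp hsum j (Finset.mem_univ _)
    have hprod : 0 < ∏ k, x (j k) := by
      apply Finset.prod_pos
      intro k _
      have hne : x (j k) ≠ 0 := fun h0 =>
        hj k (Finset.mem_filter.mpr ⟨Finset.mem_univ _, h0⟩)
      exact lt_of_le_of_ne (hx _) (Ne.symm hne)
    exact (mul_eq_zero.mp hterm).resolve_right (ne_of_gt hprod)
end

section
/- Let H be an m-uniform sunflower with singleton core {u} and r ≥ 1 petals, and let c be the positive H-eigenvector (unique up to scaling) of the adjacency tensor. Then c_u > c_v for all v ≠ u when r ≥ 2, and c_u = c_v when r = 1. -/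
/-- For the m-uniform sunflower with singleton core {u} and r ≥ 1 petals,
the positive H-eigenvector c satisfies c_u > c_v for all v ≠ u when r ≥ 2, and
c_u = c_v when r = 1. -/
theorem stmt_17 {V : Type*} [Fintype V] [DecidableEq V] (m r : ℕ) (hm : 2 ≤ m)
    (petals : Finset (Finset V)) (u : V) (hr : petals.card = r) (hr1 : 1 ≤ r)
    (hP : ∀ P ∈ petals, P.card = m ∧ u ∈ P)
    (hint : ∀ P ∈ petals, ∀ Q ∈ petals, P ≠ Q → P ∩ Q = {u})
    (hcover : ∀ v : V, ∃ P ∈ petals, v ∈ P)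
    (c : V → ℝ) (hc : ∀ v, 0 < c v) (lam : ℝ) (hlam : 0 < lam)
    (heig : ∀ i, ∑ P ∈ petals.filter (fun P => i ∈ P), ∏ v ∈ P.erase i, c v
      = lam * c i ^ (m - 1)) :
    (2 ≤ r → ∀ v, v ≠ u → c v < c u) ∧
    (r = 1 → ∀ v, v ≠ u → c u = c v) := by
  have hm0 : m ≠ 0 := by omega
  have hmm : m - 1 + 1 = m := by omega
  -- Product over a single petal for a non-core vertex
  have key : ∀ v, v ≠ u → ∀ P ∈ petals, v ∈ P → ∏ w ∈ P, c w = lam * c v ^ m := by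
    intro v hv P hPmem hvP
    have hfilt : petals.filter (fun Q => v ∈ Q) = {P} := by
      ext Q
      simp only [Finset.mem_filter, Finset.mem_singleton]
      constructor
      · rintro ⟨hQ, hvQ⟩
        by_contra hne
        have hinter := hint Q hQ P hPmem hne
        have hvmem : v ∈ ({u} : Finset V) := hinter ▸ Finset.mem_inter.mpr ⟨hvQ, hvP⟩
        exact hv (Finset.mem_singleton.mp hvmem)
      · rintro rfl; exact ⟨hPmem, hvP⟩
    have h1 := heig v
    rw [hfilt, Finset.sum_singleton] at h1
    have h2 : (∏ w ∈ P.erase v, c w) * c v = lam * c v ^ (m - 1) * c v := by rw [h1]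
    rw [Finset.prod_erase_mul _ _ hvP, mul_assoc, ← pow_succ, hmm] at h2
    exact h2
  -- Sum equation at the core vertex
  have hu : lam * c u ^ m = ∑ P ∈ petals, ∏ w ∈ P, c w := by
    have hfilt : petals.filter (fun Q => u ∈ Q) = petals :=
      Finset.filter_true_of_mem (fun P hPm => (hP P hPm).2)
    have h1 := heig u
    rw [hfilt] at h1
    have h2 : (∑ P ∈ petals, ∏ w ∈ P.erase u, c w) * c u
        = lam * c u ^ (m - 1) * c u := by rw [h1]
    rw [Finset.sum_mul, mul_assoc, ← pow_succ, hmm] at h2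
    rw [← h2]
    refine Finset.sum_congr rfl fun P hPm => ?_
    rw [Finset.prod_erase_mul _ _ (hP P hPm).2]
  constructor
  · intro hr2 v hv
    obtain ⟨P, hPmem, hvP⟩ := hcover v
    have hkey := key v hv P hPmem hvP
    obtain ⟨Q, hQmem, hQne⟩ : ∃ Q ∈ petals, Q ≠ P := by
      have : 1 < petals.card := by omega
      exact Finset.exists_mem_ne this P
    have hlt : (∏ w ∈ P, c w) < ∑ R ∈ petals, ∏ w ∈ R, c w := by
      refine Finset.single_lt_sum (f := fun R => ∏ w ∈ R, c w) hQne hPmem hQmem ?_ ?_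
      · exact Finset.prod_pos fun w _ => hc w
      · intro R hRm _
        exact (Finset.prod_pos fun w _ => hc w).le
    rw [← hu, hkey] at hlt
    have hpow : c v ^ m < c u ^ m := lt_of_mul_lt_mul_left hlt hlam.le
    exact lt_of_pow_lt_pow_left₀ m (hc u).le hpow
  · intro hr1' v hv
    obtain ⟨P, hPmem, hvP⟩ := hcover v
    have hkey := key v hv P hPmem hvP
    have hsingle : petals = {P} := by
      rw [hr1'] at hr
      obtain ⟨a, ha⟩ := Finset.card_eq_one.mp hr
      rw [ha] at hPmem ⊢
      rw [Finset.mem_singleton.mp hPmem]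
    rw [hsingle, Finset.sum_singleton, hkey] at hu
    have hpow : c u ^ m = c v ^ m := by
      have := mul_left_cancel₀ (ne_of_gt hlam) hu
      exact this
    exact le_antisymm
      (le_of_pow_le_pow_left₀ hm0 (hc v).le hpow.le)
      (le_of_pow_le_pow_left₀ hm0 (hc u).le hpow.ge)
end

section
/- Let T be the adjacency tensor of a strongly connected m-uniform hypergraph, and suppose c > 0 and c' > 0 are both nonnegative H-eigenvectors of T, i.e., (T c^{m-1})_i = λ c_i^{m-1} and (T c'^{m-1})_i = λ' c'_i^{m-1} with λ, λ' > 0. If both are normalized to ‖c‖₁ = ‖c'‖₁ = 1, then (by uniqueness for the sunflower case) for H equal to an m-uniform sunflower with singleton core, c = c'. -/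
/-- For an m-uniform sunflower with singleton core {u}, any two positive
H-eigenvectors of the adjacency tensor (with positive eigenvalues) that are normalized
to unit 1-norm coincide. -/
theorem stmt_18 {V : Type*} [Fintype V] [DecidableEq V] (m r : ℕ) (hm : 2 ≤ m)
    (petals : Finset (Finset V)) (u : V) (hr : petals.card = r) (hr1 : 1 ≤ r)
    (hP : ∀ P ∈ petals, P.card = m ∧ u ∈ P)
    (hint : ∀ P ∈ petals, ∀ Q ∈ petals, P ≠ Q → P ∩ Q = {u})
    (hcover : ∀ v : V, ∃ P ∈ petals, v ∈ P)
    (c c' : V → ℝ) (hc : ∀ v, 0 < c v) (hc' : ∀ v, 0 < c' v)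
    (lam lam' : ℝ) (hlam : 0 < lam) (hlam' : 0 < lam')
    (heig : ∀ i, ∑ P ∈ petals.filter (fun P => i ∈ P), ∏ v ∈ P.erase i, c v
      = lam * c i ^ (m - 1))
    (heig' : ∀ i, ∑ P ∈ petals.filter (fun P => i ∈ P), ∏ v ∈ P.erase i, c' v
      = lam' * c' i ^ (m - 1))
    (hnorm : ∑ v, c v = 1) (hnorm' : ∑ v, c' v = 1) :
    c = c' := by
  obtain ⟨k, rfl⟩ : ∃ k, m = k + 2 := ⟨m - 2, by omega⟩
  clear hm
  have hm1 : k + 2 - 1 = k + 1 := rfl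
  have powinj : ∀ a b : ℝ, 0 ≤ a → 0 ≤ b → a ^ (k + 2) = b ^ (k + 2) → a = b := by
    intro a b ha hb hab
    rcases lt_trichotomy a b with h | h | h
    · exact absurd hab (ne_of_lt (pow_lt_pow_left₀ h ha (by omega)))
    · exact h
    · exact absurd hab.symm (ne_of_lt (pow_lt_pow_left₀ h hb (by omega)))
  -- key lemma applied to both eigenvectors
  have key : ∀ (c : V → ℝ), (∀ v, 0 < c v) → ∀ lam : ℝ, 0 < lam →
      (∀ i, ∑ P ∈ petals.filter (fun P => i ∈ P), ∏ v ∈ P.erase i, c v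
        = lam * c i ^ (k + 2 - 1)) →
      (∀ i, i ≠ u → lam * c i = c u) ∧ lam ^ (k + 2) = r := by
    intro c hc lam hlam heig
    simp only [hm1] at heig
    -- unique petal containing a non-core vertex
    have hsingle : ∀ i, i ≠ u → ∀ P ∈ petals, i ∈ P →
        petals.filter (fun Q => i ∈ Q) = {P} := by
      intro i hi P hPm hiP
      apply Finset.eq_singleton_iff_unique_mem.mpr
      refine ⟨Finset.mem_filter.mpr ⟨hPm, hiP⟩, ?_⟩
      intro Q hQ
      rw [Finset.mem_filter] at hQ
      by_contra hne
      have hmem : i ∈ Q ∩ P := Finset.mem_inter.mpr ⟨hQ.2, hiP⟩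
      rw [hint Q hQ.1 P hPm hne] at hmem
      exact hi (Finset.mem_singleton.mp hmem)
    have heval : ∀ i, i ≠ u → ∀ P ∈ petals, i ∈ P →
        ∏ v ∈ P.erase i, c v = lam * c i ^ (k + 1) := by
      intro i hi P hPm hiP
      have := heig i
      rw [hsingle i hi P hPm hiP, Finset.sum_singleton] at this
      exact this
    -- all non-core values within a petal are equal
    have heq : ∀ P ∈ petals, ∀ i ∈ P, ∀ j ∈ P, i ≠ u → j ≠ u → c i = c j := by
      intro P hPm i hiP j hjP hi hj
      have h1 : (∏ v ∈ P.erase i, c v) * c i = ∏ v ∈ P, c v :=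
        Finset.prod_erase_mul P c hiP
      have h2 : (∏ v ∈ P.erase j, c v) * c j = ∏ v ∈ P, c v :=
        Finset.prod_erase_mul P c hjP
      rw [heval i hi P hPm hiP] at h1
      rw [heval j hj P hPm hjP] at h2
      have h3 : lam * (c i ^ (k + 1) * c i) = lam * (c j ^ (k + 1) * c j) := by
        rw [← mul_assoc, ← mul_assoc, h1, h2]
      have h4 := mul_left_cancel₀ (ne_of_gt hlam) h3
      refine powinj _ _ (le_of_lt (hc i)) (le_of_lt (hc j)) ?_
      calc c i ^ (k + 2) = c i ^ (k + 1) * c i := by ring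
        _ = c j ^ (k + 1) * c j := h4
        _ = c j ^ (k + 2) := by ring
    -- lam * c i = c u for i ≠ u
    have hcore : ∀ i, i ≠ u → lam * c i = c u := by
      intro i hi
      obtain ⟨P, hPm, hiP⟩ := hcover i
      have huP : u ∈ P := (hP P hPm).2
      have huPi : u ∈ P.erase i := Finset.mem_erase.mpr ⟨Ne.symm hi, huP⟩
      have hprod : ∏ v ∈ P.erase i, c v = c u * c i ^ k := by
        rw [← Finset.mul_prod_erase _ _ huPi]
        congr 1
        have hcongr : ∀ v ∈ (P.erase i).erase u, c v = c i := by
          intro v hv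
          rw [Finset.mem_erase, Finset.mem_erase] at hv
          exact heq P hPm v hv.2.2 i hiP hv.1 hi
        rw [Finset.prod_congr rfl hcongr, Finset.prod_const]
        congr 1
        rw [Finset.card_erase_of_mem huPi, Finset.card_erase_of_mem hiP, (hP P hPm).1]
        omega
      have h5 : lam * c i ^ (k + 1) = c u * c i ^ k := by
        rw [← heval i hi P hPm hiP, hprod]
      have h6 : lam * c i * c i ^ k = c u * c i ^ k := by
        rw [mul_assoc, ← pow_succ']
        exact h5
      exact mul_right_cancel₀ (pow_ne_zero _ (ne_of_gt (hc i))) h6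
    refine ⟨hcore, ?_⟩
    -- equation at u gives lam ^ (k+2) = r
    have hfilt : petals.filter (fun P => u ∈ P) = petals :=
      Finset.filter_true_of_mem (fun P hPm => (hP P hPm).2)
    have hu := heig u
    rw [hfilt] at hu
    have hterm : ∀ P ∈ petals, ∏ v ∈ P.erase u, c v = (c u / lam) ^ (k + 1) := by
      intro P hPm
      have hcongr : ∀ v ∈ P.erase u, c v = c u / lam := by
        intro v hv
        rw [Finset.mem_erase] at hv
        rw [eq_div_iff (ne_of_gt hlam), mul_comm]
        exact hcore v hv.1
      rw [Finset.prod_congr rfl hcongr, Finset.prod_const,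
        Finset.card_erase_of_mem (hP P hPm).2, (hP P hPm).1]
      norm_num
    rw [Finset.sum_congr rfl hterm, Finset.sum_const, hr, nsmul_eq_mul] at hu
    -- hu : r * (c u / lam) ^ (k+1) = lam * c u ^ (k+1)
    have hl1 : lam ^ (k + 1) ≠ 0 := pow_ne_zero _ (ne_of_gt hlam)
    have hcu : c u ^ (k + 1) ≠ 0 := pow_ne_zero _ (ne_of_gt (hc u))
    have h7 : (r : ℝ) * c u ^ (k + 1) = lam ^ (k + 2) * c u ^ (k + 1) := by
      have h := congrArg (· * lam ^ (k + 1)) hu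
      simp only [div_pow] at h
      rw [mul_assoc, div_mul_cancel₀ _ hl1] at h
      rw [h]; ring
    exact (mul_right_cancel₀ hcu h7).symm
  obtain ⟨hcore, hlr⟩ := key c hc lam hlam heig
  obtain ⟨hcore', hlr'⟩ := key c' hc' lam' hlam' heig'
  have hll : lam = lam' := by
    refine powinj _ _ (le_of_lt hlam) (le_of_lt hlam') ?_
    rw [hlr, hlr']
  -- normalization
  have hsum : ∀ (c : V → ℝ), (∀ v, 0 < c v) → ∀ lam : ℝ, 0 < lam →
      (∀ i, i ≠ u → lam * c i = c u) → (∑ v, c v = 1) →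
      ((Finset.univ.erase u).card : ℝ) * (c u / lam) + c u = 1 := by
    intro c hc lam hlam hcore hnorm
    have h := Finset.sum_erase_add Finset.univ c (Finset.mem_univ u)
    rw [hnorm] at h
    rw [← h]
    congr 1
    have hcongr : ∀ v ∈ Finset.univ.erase u, c v = c u / lam := by
      intro v hv
      rw [Finset.mem_erase] at hv
      rw [eq_div_iff (ne_of_gt hlam), mul_comm]
      exact hcore v hv.1
    rw [Finset.sum_congr rfl hcongr, Finset.sum_const, nsmul_eq_mul]
  have e1 := hsum c hc lam hlam hcore hnorm
  have e2 := hsum c' hc' lam' hlam' hcore' hnorm'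
  rw [← hll] at e2
  set N : ℝ := ((Finset.univ.erase u).card : ℝ) with hN
  have hN0 : 0 ≤ N := Nat.cast_nonneg _
  have hcu : c u = c' u := by
    have h9 : N * (c u / lam) + c u = N * (c' u / lam) + c' u := by rw [e1, e2]
    have h10 := congrArg (· * lam) h9
    rw [add_mul, add_mul, mul_assoc, mul_assoc, div_mul_cancel₀ _ (ne_of_gt hlam),
      div_mul_cancel₀ _ (ne_of_gt hlam)] at h10
    have h8 : (N + lam) * (c u - c' u) = 0 := by ring_nf; ring_nf at h10; linarith
    have h11 : N + lam ≠ 0 := by positivity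
    rcases mul_eq_zero.mp h8 with h | h
    · exact absurd h h11
    · linarith
  funext v
  by_cases hv : v = u
  · rw [hv, hcu]
  · have a1 := hcore v hv
    have a2 := hcore' v hv
    rw [← hll, ← hcu] at a2
    rw [← a1] at a2
    exact (mul_left_cancel₀ (ne_of_gt hlam) a2).symm
end
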